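/- arXiv:2401.05414 — 3 statements merged into one kernel-verified Lean document; each statement's English description precedes it below -/
import Mathlib

section
/- Let A be an n×n real matrix and let X, e : ℕ → ℝⁿ satisfy X_t = A X_{t-1} + e_t for all t ≥ 1, and suppose there is M ≥ 0 with ‖X_s‖ ≤ M for all s (in any fixed norm on ℝⁿ, with ‖A‖ the corresponding operator norm). For aggregation factor k ≥ 1, define X̃_t = (1/k)·∑_{i=1}^{k} X_{i+(t-1)k} and ẽ_t = (1/k)·∑_{i=1}^{k} e_{i+(t-1)k}. Then for every t ≥ 1, ‖X̃_t − A X̃_t − ẽ_t‖ ≤ 2‖A‖M/k. -/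
/-!
By the recurrence, the residual `X s - A X s - e s` of a single observation equals
`A X (s - 1) - A X s`. Averaging is linear, so the residual of a block average is `1/k` times
the sum of these residuals over the block, which telescopes to `A X c - A X (c + k)`, and both
terms have norm at most `‖A‖ M`.
-/

open Finset

theorem Finset.sum_Icc_one_pred_sub {V : Type*} [AddCommGroup V] (g : ℕ → V) (k : ℕ) :
    ∑ i ∈ Icc 1 k, (g (i - 1) - g i) = g 0 - g k := by
  induction k with
  | zero => simp
  | succ k ih =>
    rw [sum_Icc_succ_top (by omega), ih, Nat.add_sub_cancel]
    abel

section VAR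

variable {V : Type*} [AddCommGroup V]

theorem sum_Icc_residual_eq_of_recurrence {f : V → V} {X e : ℕ → V}
    (hrec : ∀ t, 1 ≤ t → X t = f (X (t - 1)) + e t) (k c : ℕ) :
    ∑ i ∈ Icc 1 k, (X (i + c) - f (X (i + c)) - e (i + c)) = f (X c) - f (X (k + c)) := by
  have hterm : ∀ i ∈ Icc 1 k,
      X (i + c) - f (X (i + c)) - e (i + c) = f (X (i - 1 + c)) - f (X (i + c)) := by
    intro i hi
    obtain ⟨hi1, -⟩ := mem_Icc.mp hi
    rw [hrec (i + c) (by omega), show i + c - 1 = i - 1 + c by omega]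
    abel
  rw [sum_congr rfl hterm, sum_Icc_one_pred_sub (fun m ↦ f (X (m + c))), zero_add]

theorem smul_sum_residual_eq_of_recurrence {R : Type*} [Semiring R] [Module R V]
    (f : V →ₗ[R] V) {X e : ℕ → V} (hrec : ∀ t, 1 ≤ t → X t = f (X (t - 1)) + e t)
    (a : R) (k c : ℕ) :
    a • ∑ i ∈ Icc 1 k, X (i + c) - f (a • ∑ i ∈ Icc 1 k, X (i + c))
        - a • ∑ i ∈ Icc 1 k, e (i + c) = a • (f (X c) - f (X (k + c))) := by
  rw [← sum_Icc_residual_eq_of_recurrence hrec, map_smul, map_sum, ← smul_sub, ← smul_sub,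
    ← sum_sub_distrib, ← sum_sub_distrib]

end VAR

theorem ContinuousLinearMap.norm_apply_sub_apply_le {E F : Type*} [SeminormedAddCommGroup E]
    [SeminormedAddCommGroup F] [NormedSpace ℝ E] [NormedSpace ℝ F] (L : E →L[ℝ] F) {x y : E}
    {M : ℝ} (hx : ‖x‖ ≤ M) (hy : ‖y‖ ≤ M) : ‖L x - L y‖ ≤ 2 * ‖L‖ * M := by
  calc ‖L x - L y‖ = ‖L (x - y)‖ := by rw [map_sub]
    _ ≤ ‖L‖ * ‖x - y‖ := L.le_opNorm _
    _ ≤ ‖L‖ * (M + M) := by gcongr; exact (norm_sub_le x y).trans (add_le_add hx hy)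
    _ = 2 * ‖L‖ * M := by ring

theorem var1_aggregated_residual_bound_general
    (n : ℕ) (A : Matrix (Fin n) (Fin n) ℝ) (X e : ℕ → Fin n → ℝ)
    (hrec : ∀ t : ℕ, 1 ≤ t → X t = A.mulVec (X (t - 1)) + e t)
    (M : ℝ) (hbdd : ∀ s : ℕ, ‖X s‖ ≤ M)
    (k : ℕ)
    (Xagg eagg : ℕ → Fin n → ℝ)
    (hXagg : ∀ t, Xagg t = (1 / (k : ℝ)) • ∑ i ∈ Finset.Icc 1 k, X (i + (t - 1) * k))
    (heagg : ∀ t, eagg t = (1 / (k : ℝ)) • ∑ i ∈ Finset.Icc 1 k, e (i + (t - 1) * k)) :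
    ∀ t : ℕ, 1 ≤ t →
      ‖Xagg t - A.mulVec (Xagg t) - eagg t‖ ≤
        2 * ‖LinearMap.toContinuousLinearMap A.mulVecLin‖ * M / k := by
  intro t _
  set L := LinearMap.toContinuousLinearMap A.mulVecLin
  have hresidual : Xagg t - A.mulVec (Xagg t) - eagg t
      = (1 / (k : ℝ)) • (L (X ((t - 1) * k)) - L (X (k + (t - 1) * k))) := by
    rw [hXagg, heagg]
    exact smul_sum_residual_eq_of_recurrence A.mulVecLin hrec _ k _
  rw [hresidual, norm_smul, one_div, norm_inv, Real.norm_natCast, div_eq_inv_mul]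
  gcongr
  exact L.norm_apply_sub_apply_le (hbdd _) (hbdd _)

/-- For a VAR(1) process `X t = A (X (t-1)) + e t` (`t ≥ 1`) with
`‖X s‖ ≤ M` for all `s`, and aggregation factor `k ≥ 1`, the aggregated series
`X̃ t = (1/k) ∑_{i=1}^k X (i+(t-1)k)`, `ẽ t = (1/k) ∑_{i=1}^k e (i+(t-1)k)` satisfy
`‖X̃ t - A X̃ t - ẽ t‖ ≤ 2‖A‖M/k` for every `t ≥ 1`, where `‖A‖` is the operator
norm of `A` acting on `ℝⁿ`. -/
theorem var1_aggregated_residual_bound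
    (n : ℕ) (A : Matrix (Fin n) (Fin n) ℝ) (X e : ℕ → Fin n → ℝ)
    (hrec : ∀ t : ℕ, 1 ≤ t → X t = A.mulVec (X (t - 1)) + e t)
    (M : ℝ) (hM : 0 ≤ M) (hbdd : ∀ s : ℕ, ‖X s‖ ≤ M)
    (k : ℕ) (hk : 1 ≤ k)
    (Xagg eagg : ℕ → Fin n → ℝ)
    (hXagg : ∀ t, Xagg t = (1 / (k : ℝ)) • ∑ i ∈ Finset.Icc 1 k, X (i + (t - 1) * k))
    (heagg : ∀ t, eagg t = (1 / (k : ℝ)) • ∑ i ∈ Finset.Icc 1 k, e (i + (t - 1) * k)) :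
    ∀ t : ℕ, 1 ≤ t →
      ‖Xagg t - A.mulVec (Xagg t) - eagg t‖ ≤
        2 * ‖LinearMap.toContinuousLinearMap A.mulVecLin‖ * M / k :=
  var1_aggregated_residual_bound_general n A X e hrec M hbdd k Xagg eagg hXagg heagg
end

section
/- Let A be an n×n real matrix and let X, e : ℕ → ℝⁿ satisfy X_t = A X_{t-1} + e_t for all t ≥ 1, with sup_s ‖X_s‖ < ∞. For each aggregation factor k ≥ 1 write X̃_t^{(k)} = (1/k)·∑_{i=1}^{k} X_{i+(t-1)k} and ẽ_t^{(k)} = (1/k)·∑_{i=1}^{k} e_{i+(t-1)k}. Then for every fixed t ≥ 1, the residual X̃_t^{(k)} − A X̃_t^{(k)} − ẽ_t^{(k)} tends to 0 in ℝⁿ as k → ∞; i.e., in the limit of large aggregation the aggregated data satisfy the instantaneous linear structural equation X̃_t = A X̃_t + ẽ_t. -/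
/-!
Summing the recurrence over a block of `k` consecutive times, the residual of the block sums
telescopes to `A (X m - X (m + k))`, where `m` is the time preceding the block. Dividing by `k`,
the residual of the block means is therefore `1/k` times a bounded quantity when `X` is bounded.
-/

open Finset Filter Topology

section Telescoping

variable {E F : Type*} [AddCommGroup E] [FunLike F E E] [AddMonoidHomClass F E E]

theorem sum_Icc_sub_map_sub_eq_map_sub (f : F) {X e : ℕ → E}
    (hrec : ∀ s, X (s + 1) = f (X s) + e (s + 1)) (m k : ℕ) :
    ∑ i ∈ Icc 1 k, (X (i + m) - f (X (i + m)) - e (i + m)) = f (X m - X (k + m)) := by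
  induction k with
  | zero => simp
  | succ k ih =>
    have hstep : X (k + 1 + m) = f (X (k + m)) + e (k + 1 + m) := by
      rw [Nat.add_right_comm, hrec]
    rw [sum_Icc_succ_top (Nat.le_add_left 1 k), ih, hstep]
    simp only [map_sub, map_add]
    abel

end Telescoping

section BlockMean

variable {E : Type*}

/-- The aggregated series `X̃ₜ⁽ᵏ⁾`: the mean of `X` over the `t`-th block of `k` times. -/
noncomputable def blockMean [AddCommGroup E] [Module ℝ E] (X : ℕ → E) (t k : ℕ) : E :=
  (1 / (k : ℝ)) • ∑ i ∈ Icc 1 k, X (i + (t - 1) * k)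

theorem blockMean_sub_map_sub {F : Type*} [AddCommGroup E] [Module ℝ E] [FunLike F E E]
    [LinearMapClass F ℝ E E] (L : F) {X e : ℕ → E}
    (hrec : ∀ s, X (s + 1) = L (X s) + e (s + 1)) (t k : ℕ) :
    blockMean X t k - L (blockMean X t k) - blockMean e t k
      = (1 / (k : ℝ)) • L (X ((t - 1) * k) - X (k + (t - 1) * k)) := by
  simp only [blockMean, map_smul, map_sum, ← smul_sub, ← sum_sub_distrib]
  rw [sum_Icc_sub_map_sub_eq_map_sub L hrec]

theorem tendsto_blockMean_sub_map_sub [NormedAddCommGroup E] [NormedSpace ℝ E]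
    (L : E →L[ℝ] E) {X e : ℕ → E} (hrec : ∀ s, X (s + 1) = L (X s) + e (s + 1))
    (hbdd : ∃ M, ∀ s, ‖X s‖ ≤ M) (t : ℕ) :
    Tendsto (fun k ↦ blockMean X t k - L (blockMean X t k) - blockMean e t k) atTop (𝓝 0) := by
  obtain ⟨M, hM⟩ := hbdd
  have hbounded : IsBoundedUnder (· ≤ ·) atTop
      (fun k ↦ ‖L (X ((t - 1) * k) - X (k + (t - 1) * k))‖) :=
    isBoundedUnder_of ⟨‖L‖ * (M + M), fun k ↦ (L.le_opNorm _).trans <|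
      mul_le_mul_of_nonneg_left ((norm_sub_le _ _).trans (add_le_add (hM _) (hM _)))
        (norm_nonneg L)⟩
  simp only [blockMean_sub_map_sub L hrec]
  exact tendsto_one_div_atTop_nhds_zero_nat.zero_smul_isBoundedUnder_le hbounded

end BlockMean

/-- For a VAR(1) process `X t = A (X (t-1)) + e t` (`t ≥ 1`) with
`sup_s ‖X s‖ < ∞`, the residual `X̃ₜ⁽ᵏ⁾ - A X̃ₜ⁽ᵏ⁾ - ẽₜ⁽ᵏ⁾` of the aggregated series
`X̃ₜ⁽ᵏ⁾ = (1/k) ∑_{i=1}^k X (i+(t-1)k)`, `ẽₜ⁽ᵏ⁾ = (1/k) ∑_{i=1}^k e (i+(t-1)k)`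
tends to `0` as the aggregation factor `k → ∞`, for every fixed `t ≥ 1`. -/
theorem var1_aggregated_residual_tendsto_zero
    (n : ℕ) (A : Matrix (Fin n) (Fin n) ℝ) (X e : ℕ → Fin n → ℝ)
    (hrec : ∀ t : ℕ, 1 ≤ t → X t = A.mulVec (X (t - 1)) + e t)
    (hbdd : ∃ M : ℝ, ∀ s : ℕ, ‖X s‖ ≤ M)
    (Xagg eagg : ℕ → ℕ → Fin n → ℝ)
    (hXagg : ∀ t k, Xagg t k = (1 / (k : ℝ)) • ∑ i ∈ Finset.Icc 1 k, X (i + (t - 1) * k))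
    (heagg : ∀ t k, eagg t k = (1 / (k : ℝ)) • ∑ i ∈ Finset.Icc 1 k, e (i + (t - 1) * k)) :
    ∀ t : ℕ, 1 ≤ t →
      Filter.Tendsto (fun k : ℕ => Xagg t k - A.mulVec (Xagg t k) - eagg t k)
        Filter.atTop (nhds (0 : Fin n → ℝ)) := by
  intro t _
  obtain rfl : Xagg = blockMean X := funext₂ hXagg
  obtain rfl : eagg = blockMean e := funext₂ heagg
  let L : (Fin n → ℝ) →L[ℝ] (Fin n → ℝ) := LinearMap.toContinuousLinearMap A.mulVecLin
  have hrecL : ∀ s, X (s + 1) = L (X s) + e (s + 1) := fun s ↦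
    hrec (s + 1) (Nat.le_add_left 1 s)
  exact tendsto_blockMean_sub_map_sub L hrecL hbdd t
end

section
/- Let A be an n×n real matrix with I − A invertible, and let X, e : ℕ → ℝⁿ satisfy X_t = A X_{t-1} + e_t for all t ≥ 1, with sup_s ‖X_s‖ < ∞. For each aggregation factor k ≥ 1 write X̃_t^{(k)} = (1/k)·∑_{i=1}^{k} X_{i+(t-1)k} and ẽ_t^{(k)} = (1/k)·∑_{i=1}^{k} e_{i+(t-1)k}. Then for every fixed t ≥ 1, X̃_t^{(k)} − (I − A)^{-1} ẽ_t^{(k)} → 0 in ℝⁿ as k → ∞. -/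
/-!
Summing `e i = (1 - A) X i + A (X i - X (i - 1))` over a block of `k` consecutive times, the
second term telescopes, so `(1 - A)⁻¹ ẽ` and `X̃` differ by `(1 / k) • (1 - A)⁻¹ A (X m - X (m + k))`
for the time `m` just before the block. This is `1 / k` times a bounded vector.
-/

open Finset Filter Topology Matrix

theorem sum_Icc_one_sub_pred {G : Type*} [AddCommGroup G] (f : ℕ → G) (m k : ℕ) :
    ∑ i ∈ Icc 1 k, (f (i + m) - f (i + m - 1)) = f (k + m) - f m := by
  induction k with
  | zero => simp
  | succ k ih =>
    rw [sum_Icc_succ_top (by omega), ih, show k + 1 + m - 1 = k + m by omega]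
    abel

section VAR1

variable {R ι : Type*} [Fintype ι] [DecidableEq ι] {A : Matrix ι ι R} {X e : ℕ → ι → R}

theorem var1_sum_innovations [Ring R] (hrec : ∀ t : ℕ, 1 ≤ t → X t = A *ᵥ X (t - 1) + e t)
    (m k : ℕ) :
    ∑ i ∈ Icc 1 k, e (i + m) = (1 - A) *ᵥ ∑ i ∈ Icc 1 k, X (i + m) + A *ᵥ (X (k + m) - X m) := by
  have hsplit : ∀ i ∈ Icc 1 k,
      e (i + m) = (1 - A) *ᵥ X (i + m) + A *ᵥ (X (i + m) - X (i + m - 1)) := by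
    intro i hi
    rw [hrec (i + m) (by grind), sub_mulVec, one_mulVec, mulVec_sub]
    abel
  rw [sum_congr rfl hsplit, sum_add_distrib, ← mulVec_sum, ← mulVec_sum, sum_Icc_one_sub_pred]

theorem var1_smul_sum_sub_inv_mulVec [CommRing R]
    (hrec : ∀ t : ℕ, 1 ≤ t → X t = A *ᵥ X (t - 1) + e t) {B : Matrix ι ι R}
    (hB : B * (1 - A) = 1) (c : R) (m k : ℕ) :
    c • ∑ i ∈ Icc 1 k, X (i + m) - B *ᵥ (c • ∑ i ∈ Icc 1 k, e (i + m))
      = c • ((B * A) *ᵥ (X m - X (k + m))) := by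
  rw [var1_sum_innovations hrec, mulVec_smul, ← smul_sub, mulVec_add, mulVec_mulVec, hB,
    one_mulVec, mulVec_mulVec, ← neg_sub (X m), mulVec_neg]
  congr 1
  abel

end VAR1

section LinftyOp

attribute [local instance] Matrix.linftyOpNormedAddCommGroup

theorem tendsto_one_div_smul_mulVec_sub {ι : Type*} [Fintype ι] {X : ℕ → ι → ℝ} {M : ℝ}
    (hM : ∀ s, ‖X s‖ ≤ M) (C : Matrix ι ι ℝ) (a b : ℕ → ℕ) :
    Tendsto (fun k : ℕ => (1 / (k : ℝ)) • (C *ᵥ (X (a k) - X (b k)))) atTop (𝓝 0) := by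
  refine tendsto_one_div_atTop_nhds_zero_nat.zero_smul_isBoundedUnder_le
    (isBoundedUnder_of ⟨‖C‖ * (M + M), fun k => ?_⟩)
  calc ‖C *ᵥ (X (a k) - X (b k))‖
      ≤ ‖C‖ * ‖X (a k) - X (b k)‖ := linfty_opNorm_mulVec C _
    _ ≤ ‖C‖ * (M + M) := by
        gcongr
        exact (norm_sub_le _ _).trans (add_le_add (hM _) (hM _))

end LinftyOp

/-- For a VAR(1) process `X t = A (X (t-1)) + e t` (`t ≥ 1`) with
`I - A` invertible and `sup_s ‖X s‖ < ∞`, the aggregated series satisfies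
`X̃ₜ⁽ᵏ⁾ - (I - A)⁻¹ ẽₜ⁽ᵏ⁾ → 0` as the aggregation factor `k → ∞`, for every fixed `t ≥ 1`. -/
theorem var1_aggregated_limit_structural_solution
    (n : ℕ) (A : Matrix (Fin n) (Fin n) ℝ) (hA : IsUnit (1 - A))
    (X e : ℕ → Fin n → ℝ)
    (hrec : ∀ t : ℕ, 1 ≤ t → X t = A.mulVec (X (t - 1)) + e t)
    (hbdd : ∃ M : ℝ, ∀ s : ℕ, ‖X s‖ ≤ M)
    (Xagg eagg : ℕ → ℕ → Fin n → ℝ)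
    (hXagg : ∀ t k, Xagg t k = (1 / (k : ℝ)) • ∑ i ∈ Finset.Icc 1 k, X (i + (t - 1) * k))
    (heagg : ∀ t k, eagg t k = (1 / (k : ℝ)) • ∑ i ∈ Finset.Icc 1 k, e (i + (t - 1) * k)) :
    ∀ t : ℕ, 1 ≤ t →
      Filter.Tendsto (fun k : ℕ => Xagg t k - ((1 - A)⁻¹).mulVec (eagg t k))
        Filter.atTop (nhds (0 : Fin n → ℝ)) := by
  intro t _
  obtain ⟨M, hM⟩ := hbdd
  have hB : (1 - A)⁻¹ * (1 - A) = 1 :=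
    nonsing_inv_mul _ ((isUnit_iff_isUnit_det _).mp hA)
  refine (tendsto_one_div_smul_mulVec_sub hM ((1 - A)⁻¹ * A) (fun k => (t - 1) * k)
    (fun k => k + (t - 1) * k)).congr fun k => ?_
  rw [hXagg, heagg]
  exact (var1_smul_sum_sub_inv_mulVec hrec hB _ _ _).symm
end
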